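/- arXiv:1312.0799 — 2 statements merged into one kernel-verified Lean document; each statement's English description precedes it below -/
import Mathlib

section
/- Fix N ≥ 1 and work in the ring of formal power series in variables t₀, t₁, …, t_N (over ℚ). There is a unique formal power series v = v(t₀,…,t_N) with zero constant term satisfying v = Σ_{p=0}^{N} t_p · v^p / p!, and it is given explicitly by v = Σ_{n≥1} (1/n) Σ_{p₁+⋯+p_n = n−1, 0 ≤ p_i ≤ N} (t_{p₁}/p₁!) ⋯ (t_{p_n}/p_n!). -/
/-- The coefficient, at the monomial `d`, of the explicit series
`v = Σ_{n≥1} (1/n) Σ_{p₁+⋯+p_n=n−1} (t_{p₁}/p₁!)⋯(t_{p_n}/p_n!)`. -/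
noncomputable def explicitVCoeff (N : ℕ) (d : Fin (N + 1) →₀ ℕ) : ℚ :=
  (1 / ((d.sum fun _ k => k : ℕ) : ℚ)) *
    ∑ p ∈ Finset.univ.filter (fun p : Fin (d.sum fun _ k => k) → Fin (N + 1) =>
        (∑ i, ((p i : ℕ))) + 1 = d.sum (fun _ k => k) ∧
        ∀ q, d q = (Finset.univ.filter fun i => p i = q).card),
      ∏ i, (1 / (((p i : ℕ).factorial : ℚ)))

/-- `v` has zero constant term and solves `v = Σ_{p=0}^N t_p v^p / p!`. -/
def IsDispersionlessTopologicalSolution (N : ℕ)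
    (v : MvPowerSeries (Fin (N + 1)) ℚ) : Prop :=
  MvPowerSeries.constantCoeff v = 0 ∧
  v = ∑ p : Fin (N + 1),
        (((p : ℕ).factorial : ℚ)⁻¹) • (MvPowerSeries.X p * v ^ (p : ℕ))

/-!
Read `v` as a sum over plane trees whose vertices carry labels `p ∈ {0, …, N}`, a vertex labelled
`p` having `p` children and weight `t_p / p!`. A tree is encoded by its Łukasiewicz word, the
preorder list of labels, and a forest of `q` trees by the concatenation of `q` such words, which
factors uniquely; so the weighted generating function `V_q` of forests is `V_1 ^ q`, and removing
the root gives `V_1 = Σ_p t_p V_1 ^ p / p!`. Two solutions `v, w` satisfy `v - w = (v - w) h` with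
`h` of zero constant coefficient, so they coincide. Finally, by the cycle lemma exactly one of the
`n` rotations of a word of length `n` and letter sum `n - 1` is a Łukasiewicz word, which produces
the factor `1 / n` of the explicit formula.
-/

open MvPowerSeries

/-- `w` lists, in preorder, the numbers of children of the vertices of a plane forest with `q`
trees; for `q = 1` these are the Łukasiewicz words. -/
def IsForestWord (q : ℕ) (w : List ℕ) : Prop :=
  w.sum + q = w.length ∧ ∀ k < w.length, k < (w.take k).sum + q

instance (q : ℕ) : DecidablePred (IsForestWord q) :=
  fun _ => inferInstanceAs (Decidable (_ ∧ _))

theorem isForestWord_zero_iff {w : List ℕ} : IsForestWord 0 w ↔ w = [] := by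
  refine ⟨fun ⟨_, h⟩ => List.eq_nil_of_length_eq_zero ?_, fun hw => ?_⟩
  · by_contra hlen
    simpa using h 0 (by omega)
  · simp [hw, IsForestWord]

theorem isForestWord_one_cons {a : ℕ} {w : List ℕ} :
    IsForestWord 1 (a :: w) ↔ IsForestWord a w := by
  simp only [IsForestWord, List.sum_cons, List.length_cons]
  refine ⟨fun ⟨hsum, h⟩ => ⟨by omega, fun k hk => ?_⟩,
    fun ⟨hsum, h⟩ => ⟨by omega, ?_⟩⟩
  · simpa [add_comm a] using h (k + 1) (by omega)
  · rintro (_ | k) hk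
    · simp
    · simpa [add_comm a] using h k (by omega)

theorem IsForestWord.append {q : ℕ} {u v : List ℕ} (hu : IsForestWord 1 u)
    (hv : IsForestWord q v) : IsForestWord (q + 1) (u ++ v) := by
  have hu₁ := hu.1
  have hv₁ := hv.1
  refine ⟨by simp only [List.sum_append, List.length_append]; omega, fun k hk => ?_⟩
  rcases lt_or_ge k u.length with hku | hku
  · rw [List.take_append_of_le_length hku.le]
    have := hu.2 k hku
    omega
  · obtain ⟨t, rfl⟩ := Nat.exists_eq_add_of_le hku
    rw [List.take_length_add_append, List.sum_append]
    have := hv.2 t (by simp at hk; omega)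
    omega

/-- The first tree of a forest ends at the first position `ℓ` where the prefix sum drops
below `ℓ`. -/
theorem IsForestWord.exists_append {q : ℕ} {w : List ℕ} (h : IsForestWord (q + 1) w) :
    ∃ u v, IsForestWord 1 u ∧ IsForestWord q v ∧ w = u ++ v := by
  have hw := h.1
  have hex : ∃ ℓ, (w.take ℓ).sum < ℓ := ⟨w.length, by rw [List.take_length]; omega⟩
  set ℓ := Nat.find hex
  have hℓ : (w.take ℓ).sum < ℓ := Nat.find_spec hex
  have hmin : ∀ k < ℓ, k ≤ (w.take k).sum := fun k hk => not_lt.1 (Nat.find_min hex hk)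
  have hℓpos : 0 < ℓ := Nat.pos_of_ne_zero fun h0 => by simp [h0] at hℓ
  have hℓlen : ℓ ≤ w.length := Nat.find_min' hex (by rw [List.take_length]; omega)
  have hsumℓ : (w.take ℓ).sum + 1 = ℓ := by
    have hlast := List.sum_take_succ w (ℓ - 1) (by omega)
    rw [Nat.sub_add_cancel hℓpos] at hlast
    have := hmin (ℓ - 1) (by omega)
    omega
  refine ⟨w.take ℓ, w.drop ℓ, ⟨by simpa [hℓlen] using hsumℓ, fun k hk => ?_⟩,
    ⟨?_, fun t ht => ?_⟩, (List.take_append_drop ℓ w).symm⟩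
  · simp only [List.length_take, lt_min_iff] at hk
    rw [List.take_take, min_eq_left hk.1.le]
    have := hmin k hk.1
    omega
  · have := List.sum_take_add_sum_drop w ℓ
    simp only [List.length_drop]
    omega
  · simp only [List.length_drop] at ht
    have hk := h.2 (ℓ + t) (by omega)
    rw [List.take_add, List.sum_append] at hk
    omega

theorem IsForestWord.eq_of_isPrefix {u w : List ℕ} (hu : IsForestWord 1 u)
    (hw : IsForestWord 1 w) (h : u <+: w) : u = w := by
  obtain ⟨t, rfl⟩ := h
  cases t with
  | nil => simp
  | cons a t =>
    have := hw.2 u.length (by simp)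
    rw [List.take_left' rfl] at this
    have := hu.1
    omega

theorem IsForestWord.eq_of_append_eq {u u' v v' : List ℕ} (hu : IsForestWord 1 u)
    (hu' : IsForestWord 1 u') (h : u ++ v = u' ++ v') : u = u' := by
  rcases List.prefix_or_prefix_of_prefix (List.prefix_append u v)
      (h ▸ List.prefix_append u' v') with hpre | hpre
  · exact hu.eq_of_isPrefix hu' hpre
  · exact (hu'.eq_of_isPrefix hu hpre).symm

/-- The first minimiser `k` of `F` on `[0, n)` satisfies `F k ≤ F (k + t)` for all `t < n`,
since the values of `F` on `[n, 2n)` are those on `[0, n)` lowered by one. -/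
theorem existsUnique_forall_le_add_of_add_eq_sub_one {n : ℕ} (hn : 0 < n) (F : ℕ → ℤ)
    (hF : ∀ t < n, F (t + n) = F t - 1) : ∃! k, k < n ∧ ∀ t < n, F k ≤ F (k + t) := by
  have hmin : ∃ k, k < n ∧ ∀ j < n, F k ≤ F j := by
    obtain ⟨k, hk, hkmin⟩ := (Finset.range n).exists_min_image F ⟨0, by simpa using hn⟩
    exact ⟨k, by simpa using hk, fun j hj => hkmin j (by simpa using hj)⟩
  obtain ⟨hk₀n, hk₀⟩ := Nat.find_spec hmin
  set k₀ := Nat.find hmin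
  have hgood : ∀ t < n, F k₀ ≤ F (k₀ + t) := by
    intro t ht
    rcases lt_or_ge (k₀ + t) n with hlt | hge
    · exact hk₀ _ hlt
    · set r := k₀ + t - n
      have hr : r < k₀ := by omega
      obtain ⟨j, hj, hjr⟩ : ∃ j < n, F j < F r := by
        have := Nat.find_min hmin hr
        push Not at this
        exact this (by omega)
      rw [show k₀ + t = r + n by omega, hF r (by omega)]
      have := hk₀ j hj
      omega
  have hlt : ∀ a b, a < b → b < n → (∀ t < n, F a ≤ F (a + t)) →
      (∀ t < n, F b ≤ F (b + t)) → False := by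
    intro a b hab hb ha hb'
    have h₁ := ha (b - a) (by omega)
    have h₂ := hb' (a + n - b) (by omega)
    rw [show a + (b - a) = b by omega] at h₁
    rw [show b + (a + n - b) = a + n by omega, hF a (by omega)] at h₂
    omega
  refine ⟨k₀, ⟨hk₀n, hgood⟩, fun k ⟨hk, hkgood⟩ => ?_⟩
  rcases lt_trichotomy k k₀ with h | h | h
  · exact (hlt k k₀ h hk₀n hkgood hgood).elim
  · exact h
  · exact (hlt k₀ k h hk hgood hkgood).elim

theorem List.rotate_eq_take_drop_append_self {α : Type*} {w : List α} {k : ℕ}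
    (hk : k ≤ w.length) :
    w.rotate k = ((w ++ w).drop k).take w.length := by
  rw [List.rotate_eq_drop_append_take hk, List.drop_append_of_le_length hk, List.take_append,
    List.take_of_length_le (l := w.drop k) (by simp), List.length_drop, Nat.sub_sub_self hk]

theorem List.sum_take_rotate_add_sum_take {M : Type*} [AddCommMonoid M] {w : List M} {k t : ℕ}
    (hk : k ≤ w.length) (ht : t ≤ w.length) :
    ((w.rotate k).take t).sum + ((w ++ w).take k).sum = ((w ++ w).take (k + t)).sum := by
  rw [List.rotate_eq_take_drop_append_self hk, List.take_take, min_eq_left ht, List.take_add,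
    List.sum_append, add_comm]

/-- The cycle lemma of Dvoretzky and Motzkin. -/
theorem existsUnique_isForestWord_one_rotate {w : List ℕ} (hw : w.sum + 1 = w.length) :
    ∃! k, k < w.length ∧ IsForestWord 1 (w.rotate k) := by
  set F : ℕ → ℤ := fun t => (((w ++ w).take t).sum : ℤ) - t
  have hF : ∀ t < w.length, F (t + w.length) = F t - 1 := by
    intro t ht
    simp only [F]
    rw [add_comm t, List.take_length_add_append, List.take_append_of_le_length ht.le,
      List.sum_append, Nat.cast_add]
    omega
  have hrot : ∀ k < w.length,
      IsForestWord 1 (w.rotate k) ↔ ∀ t < w.length, F k ≤ F (k + t) := by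
    intro k hk
    have hrw : (w.rotate k).sum + 1 = (w.rotate k).length := by
      rwa [(w.rotate_perm k).sum_eq, List.length_rotate]
    simp only [IsForestWord, hrw, List.length_rotate, true_and, F]
    refine forall₂_congr fun t ht => ?_
    have := List.sum_take_rotate_add_sum_take hk.le ht.le
    omega
  obtain ⟨k, ⟨hk, hkF⟩, huniq⟩ :=
    existsUnique_forall_le_add_of_add_eq_sub_one (n := w.length) (by omega) F hF
  exact ⟨k, ⟨hk, (hrot k hk).2 hkF⟩,
    fun j ⟨hj, hjw⟩ => huniq j ⟨hj, (hrot j hj).1 hjw⟩⟩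

section WordSeries

variable {σ R : Type*} [DecidableEq σ]

noncomputable def wordsWithContent (d : σ →₀ ℕ) : Finset (List σ) :=
  (Finsupp.toMultiset d).lists.toFinset

theorem mem_wordsWithContent {d : σ →₀ ℕ} {w : List σ} :
    w ∈ wordsWithContent d ↔ Multiset.toFinsupp (w : Multiset σ) = d := by
  rw [wordsWithContent, Multiset.mem_toFinset, Multiset.mem_lists_iff, Multiset.toFinsupp_eq_iff,
    eq_comm]
  rfl

theorem cons_mem_wordsWithContent {d : σ →₀ ℕ} {s : σ} {w : List σ} :
    s :: w ∈ wordsWithContent d ↔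
      Finsupp.single s 1 ≤ d ∧ w ∈ wordsWithContent (d - Finsupp.single s 1) := by
  rw [mem_wordsWithContent, mem_wordsWithContent, ← Multiset.cons_coe, ← Multiset.singleton_add,
    Multiset.toFinsupp_add, Multiset.toFinsupp_singleton]
  constructor
  · rintro rfl
    simp
  · rintro ⟨hle, h⟩
    rw [h, add_tsub_cancel_of_le hle]

theorem append_mem_wordsWithContent {a b : σ →₀ ℕ} {u v : List σ}
    (hu : u ∈ wordsWithContent a) (hv : v ∈ wordsWithContent b) :
    u ++ v ∈ wordsWithContent (a + b) := by
  rw [mem_wordsWithContent] at *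
  rw [← Multiset.coe_add, Multiset.toFinsupp_add, hu, hv]

theorem length_eq_of_mem_wordsWithContent {d : σ →₀ ℕ} {w : List σ}
    (hw : w ∈ wordsWithContent d) : w.length = d.sum fun _ k => k := by
  rw [mem_wordsWithContent, Multiset.toFinsupp_eq_iff] at hw
  rw [← Multiset.coe_card, hw, Finsupp.card_toMultiset]
  rfl

theorem rotate_mem_wordsWithContent {d : σ →₀ ℕ} {w : List σ}
    (hw : w ∈ wordsWithContent d) (k : ℕ) : w.rotate k ∈ wordsWithContent d := by
  rwa [mem_wordsWithContent, Multiset.coe_eq_coe.2 (w.rotate_perm k), ← mem_wordsWithContent]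

variable [CommSemiring R] (c : σ → R)

open scoped Classical in
/-- The generating function of the words satisfying `P`, the letter `s` having weight
`c s • X s`. -/
noncomputable def wordSeries (P : List σ → Prop) : MvPowerSeries σ R :=
  fun d => ∑ w ∈ (wordsWithContent d).filter P, (w.map c).prod

theorem coeff_wordSeries (P : List σ → Prop) [DecidablePred P] (d : σ →₀ ℕ) :
    coeff d (wordSeries c P) = ∑ w ∈ (wordsWithContent d).filter P, (w.map c).prod := by
  simp only [wordSeries, coeff_apply]
  congr

theorem wordSeries_eq_nil : wordSeries c (· = []) = (1 : MvPowerSeries σ R) := by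
  ext d
  rw [coeff_wordSeries, coeff_one]
  split_ifs with hd
  · subst hd
    rw [Finset.sum_eq_single_of_mem [] (by simp [mem_wordsWithContent])
      fun w hw hne => (hne (Finset.mem_filter.1 hw).2).elim]
    simp
  · refine Finset.sum_eq_zero fun w hw => ?_
    obtain ⟨hw, rfl⟩ := Finset.mem_filter.1 hw
    simp [mem_wordsWithContent, eq_comm, hd] at hw

theorem wordSeries_mul {P Q : List σ → Prop}
    (hP : ∀ u v u' v', P u → P u' → u ++ v = u' ++ v' → u = u') :
    wordSeries c P * wordSeries c Q =
      wordSeries c (fun w => ∃ u v, P u ∧ Q v ∧ w = u ++ v) := by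
  classical
  ext d
  simp only [coeff_mul, coeff_wordSeries, Finset.sum_mul_sum, ← Finset.sum_product',
    Finset.sum_sigma']
  refine Finset.sum_bij (fun x _ => x.2.1 ++ x.2.2) ?_ ?_ ?_ ?_
  · rintro ⟨⟨a, b⟩, ⟨u, v⟩⟩ hx
    simp only [Finset.mem_sigma, Finset.mem_product, Finset.mem_filter,
      Finset.HasAntidiagonal.mem_antidiagonal] at hx
    obtain ⟨rfl, ⟨hu, hPu⟩, hv, hQv⟩ := hx
    exact Finset.mem_filter.2 ⟨append_mem_wordsWithContent hu hv, u, v, hPu, hQv, rfl⟩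
  · rintro ⟨⟨a, b⟩, ⟨u, v⟩⟩ hx ⟨⟨a', b'⟩, ⟨u', v'⟩⟩ hx' h
    simp only [Finset.mem_sigma, Finset.mem_product, Finset.mem_filter,
      Finset.HasAntidiagonal.mem_antidiagonal, mem_wordsWithContent] at hx hx'
    obtain rfl := hP u v u' v' hx.2.1.2 hx'.2.1.2 h
    obtain rfl := List.append_cancel_left h
    simp only [← hx.2.1.1, ← hx.2.2.1, ← hx'.2.1.1, ← hx'.2.2.1]
  · intro w hw
    obtain ⟨hw, u, v, hu, hv, rfl⟩ := Finset.mem_filter.1 hw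
    refine ⟨⟨(Multiset.toFinsupp u, Multiset.toFinsupp v), (u, v)⟩, ?_, rfl⟩
    rw [mem_wordsWithContent, ← Multiset.coe_add, Multiset.toFinsupp_add] at hw
    simp [mem_wordsWithContent, hw, hu, hv]
  · intro x _
    rw [List.map_append, List.prod_append]

theorem smul_X_mul_wordSeries (s : σ) (P : List σ → Prop) :
    c s • (X s * wordSeries c P) = wordSeries c (fun w => ∃ l, P l ∧ w = s :: l) := by
  classical
  ext d
  rw [coeff_smul, X_def, coeff_monomial_mul, one_mul, coeff_wordSeries]
  split_ifs with hs
  · rw [coeff_wordSeries, Finset.mul_sum]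
    refine Finset.sum_bij (fun l _ => s :: l) (fun l hl => ?_)
      (fun _ _ _ _ h => List.cons_injective h) (fun w hw => ?_) (fun l _ => by simp)
    · obtain ⟨hl, hPl⟩ := Finset.mem_filter.1 hl
      exact Finset.mem_filter.2 ⟨cons_mem_wordsWithContent.2 ⟨hs, hl⟩, l, hPl, rfl⟩
    · obtain ⟨hw, l, hPl, rfl⟩ := Finset.mem_filter.1 hw
      exact ⟨l, Finset.mem_filter.2 ⟨(cons_mem_wordsWithContent.1 hw).2, hPl⟩, rfl⟩
  · refine (mul_zero _).trans (Finset.sum_eq_zero fun w hw => ?_).symm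
    obtain ⟨hw, l, -, rfl⟩ := Finset.mem_filter.1 hw
    exact (hs (cons_mem_wordsWithContent.1 hw).1).elim

theorem sum_wordSeries {ι : Type*} (s : Finset ι) (P : ι → List σ → Prop)
    (hP : ∀ i ∈ s, ∀ j ∈ s, ∀ w, P i w → P j w → i = j) :
    ∑ i ∈ s, wordSeries c (P i) = wordSeries c (fun w => ∃ i ∈ s, P i w) := by
  classical
  ext d
  simp only [map_sum, coeff_wordSeries]
  rw [← Finset.sum_biUnion fun i hi j hj hij => Finset.disjoint_left.2 fun w hwi hwj =>
    hij (hP i hi j hj w (Finset.mem_filter.1 hwi).2 (Finset.mem_filter.1 hwj).2)]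
  congr 1
  ext w
  simp only [Finset.mem_biUnion, Finset.mem_filter]
  tauto

end WordSeries

section ForestSeries

variable {σ R : Type*} [DecidableEq σ] [CommSemiring R] (c : σ → R) (ar : σ → ℕ)

noncomputable def forestSeries (q : ℕ) : MvPowerSeries σ R :=
  wordSeries c fun w => IsForestWord q (w.map ar)

theorem forestSeries_zero : forestSeries c ar 0 = 1 := by
  simp only [forestSeries, isForestWord_zero_iff, List.map_eq_nil_iff]
  exact wordSeries_eq_nil c

theorem forestSeries_succ (q : ℕ) :
    forestSeries c ar (q + 1) = forestSeries c ar 1 * forestSeries c ar q := by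
  rw [forestSeries, forestSeries, forestSeries, wordSeries_mul]
  · congr
    funext w
    refine propext ⟨fun h => ?_, ?_⟩
    · obtain ⟨u, v, hu, hv, huv⟩ := h.exists_append
      obtain ⟨u, v, rfl, rfl, rfl⟩ := List.map_eq_append_iff.1 huv
      exact ⟨u, v, hu, hv, rfl⟩
    · rintro ⟨u, v, hu, hv, rfl⟩
      rw [List.map_append]
      exact hu.append hv
  · intro u v u' v' hu hu' h
    have := congrArg List.length
      (hu.eq_of_append_eq hu' (by rw [← List.map_append, ← List.map_append, h]))
    exact (List.append_inj h (by simpa using this)).1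

theorem forestSeries_eq_pow (q : ℕ) : forestSeries c ar q = forestSeries c ar 1 ^ q := by
  induction q with
  | zero => exact forestSeries_zero c ar
  | succ q ih => rw [forestSeries_succ, ih, pow_succ']

theorem forestSeries_one_eq_sum [Fintype σ] :
    forestSeries c ar 1 = ∑ s, c s • (X s * forestSeries c ar 1 ^ ar s) := by
  simp only [← forestSeries_eq_pow]
  simp only [forestSeries, smul_X_mul_wordSeries]
  rw [sum_wordSeries _ _ _ fun s _ s' _ w ⟨l, _, hl⟩ ⟨l', _, hl'⟩ =>
    (List.cons_eq_cons.1 (hl.symm.trans hl')).1]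
  congr
  funext w
  cases w with
  | nil => simp [IsForestWord]
  | cons s l => simp [isForestWord_one_cons]

theorem constantCoeff_forestSeries_one : constantCoeff (forestSeries c ar 1) = 0 := by
  rw [← coeff_zero_eq_constantCoeff_apply, forestSeries, coeff_wordSeries]
  refine Finset.sum_eq_zero fun w hw => ?_
  obtain ⟨hw, hforest⟩ := Finset.mem_filter.1 hw
  obtain rfl : w = [] := by simpa [mem_wordsWithContent, Multiset.toFinsupp_eq_iff] using hw
  simp [IsForestWord] at hforest

end ForestSeries

theorem eq_of_eq_sum_smul_X_mul_pow {σ R : Type*} [CommRing R] [Fintype σ] (c : σ → R)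
    (ar : σ → ℕ) {v w : MvPowerSeries σ R} (hv : v = ∑ s, c s • (X s * v ^ ar s))
    (hw : w = ∑ s, c s • (X s * w ^ ar s)) : v = w := by
  choose g hg using fun s => sub_dvd_pow_sub_pow v w (ar s)
  set h := ∑ s, c s • (X s * g s)
  have hfix : v - w = (v - w) * h :=
    calc v - w = ∑ s, c s • (X s * (v ^ ar s - w ^ ar s)) := by
          conv_lhs => rw [hv, hw]
          simp only [mul_sub, smul_sub, Finset.sum_sub_distrib]
      _ = (v - w) * h := by simp only [hg, h, Finset.mul_sum, mul_smul_comm, mul_left_comm]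
  have hunit : IsUnit (1 - h) := by
    simp [isUnit_iff_constantCoeff, h]
  rw [← sub_eq_zero, ← hunit.mul_left_eq_zero, mul_sub, mul_one, sub_eq_zero]
  exact hfix

theorem sum_eq_nsmul_sum_filter_isForestWord_one {α M : Type*} [AddCommMonoid M] (ar : α → ℕ)
    {S : Finset (List α)} {n : ℕ} (hS : ∀ w ∈ S, (w.map ar).sum + 1 = n ∧ w.length = n)
    (hrot : ∀ w ∈ S, ∀ k, w.rotate k ∈ S) (f : List α → M)
    (hf : ∀ w k, f (w.rotate k) = f w) :
    ∑ w ∈ S, f w = n • ∑ w ∈ S.filter (fun w => IsForestWord 1 (w.map ar)), f w := by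
  set P : List α → Prop := fun w => IsForestWord 1 (w.map ar)
  have hone : ∀ w ∈ S, ∑ k ∈ Finset.range n, (if P (w.rotate k) then f w else 0) = f w := by
    intro w hw
    obtain ⟨hsum, hlen⟩ := hS w hw
    obtain ⟨k, ⟨hk, hkw⟩, huniq⟩ :=
      existsUnique_isForestWord_one_rotate (w := w.map ar) (by simpa [hlen])
    simp only [List.length_map, hlen, ← List.map_rotate] at hk hkw huniq
    rw [Finset.sum_eq_single_of_mem k (Finset.mem_range.2 hk)
      fun j hj hjk => if_neg fun h => hjk (huniq j ⟨Finset.mem_range.1 hj, h⟩), if_pos hkw]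
  have hperm : ∀ k ∈ Finset.range n,
      ∑ w ∈ S, (if P (w.rotate k) then f (w.rotate k) else 0) =
        ∑ w ∈ S, if P w then f w else 0 := by
    intro k hk
    have hback : ∀ w ∈ S, w.rotate (k + (n - k)) = w := fun w hw => by
      rw [Nat.add_sub_cancel' (Finset.mem_range.1 hk).le, ← (hS w hw).2, List.rotate_length]
    refine Finset.sum_nbij' (fun w => w.rotate k) (fun w => w.rotate (n - k))
      (fun w hw => hrot w hw k) (fun w hw => hrot w hw _) (fun w hw => ?_) (fun w hw => ?_)
      fun _ _ => rfl
    · rw [List.rotate_rotate, hback w hw]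
    · rw [List.rotate_rotate, add_comm, hback w hw]
  calc ∑ w ∈ S, f w
      = ∑ w ∈ S, ∑ k ∈ Finset.range n, if P (w.rotate k) then f (w.rotate k) else 0 :=
        Finset.sum_congr rfl fun w hw => by simp only [hf, hone w hw]
    _ = ∑ k ∈ Finset.range n, ∑ w ∈ S, if P w then f w else 0 := by
        rw [Finset.sum_comm]
        exact Finset.sum_congr rfl hperm
    _ = n • ∑ w ∈ S.filter P, f w := by
        rw [Finset.sum_const, Finset.card_range, Finset.sum_filter]

theorem sum_filter_sum_add_one_eq_nsmul_coeff_forestSeries {σ R : Type*} [DecidableEq σ]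
    [CommSemiring R] (c : σ → R) (ar : σ → ℕ) (d : σ →₀ ℕ) :
    ∑ w ∈ (wordsWithContent d).filter (fun w => (w.map ar).sum + 1 = d.sum fun _ k => k),
      (w.map c).prod = (d.sum fun _ k => k) • coeff d (forestSeries c ar 1) := by
  rw [sum_eq_nsmul_sum_filter_isForestWord_one ar
    (fun w hw => ⟨(Finset.mem_filter.1 hw).2,
      length_eq_of_mem_wordsWithContent (Finset.mem_filter.1 hw).1⟩)
    (fun w hw k => ?_) _ fun w k => ((w.rotate_perm k).map c).prod_eq,
    forestSeries, coeff_wordSeries, Finset.filter_filter]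
  · refine congrArg _ (Finset.sum_congr (Finset.filter_congr fun w hw => ?_) fun _ _ => rfl)
    refine ⟨fun h => h.2, fun h => ⟨?_, h⟩⟩
    rw [h.1, List.length_map, length_eq_of_mem_wordsWithContent hw]
  · obtain ⟨hw, hsum⟩ := Finset.mem_filter.1 hw
    refine Finset.mem_filter.2 ⟨rotate_mem_wordsWithContent hw k, ?_⟩
    rwa [List.map_rotate, ((w.map ar).rotate_perm k).sum_eq]

theorem sum_filter_ofFn_mem {α M : Type*} [Fintype α] [DecidableEq α] [AddCommMonoid M] {n : ℕ}
    (T : Finset (List α)) (hT : ∀ w ∈ T, w.length = n) (f : List α → M) :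
    ∑ p ∈ Finset.univ.filter (fun p : Fin n → α => List.ofFn p ∈ T), f (List.ofFn p) =
      ∑ w ∈ T, f w :=
  Finset.sum_bij (fun p _ => List.ofFn p) (fun _ hp => (Finset.mem_filter.1 hp).2)
    (fun _ _ _ _ h => List.ofFn_injective h)
    (fun w hw => by
      obtain rfl := hT w hw
      exact ⟨fun i => w[i], by simpa using hw, List.ofFn_getElem⟩)
    fun _ _ => rfl

theorem Multiset.toFinsupp_ofFn_apply {α : Type*} [DecidableEq α] {n : ℕ} (p : Fin n → α)
    (a : α) :
    Multiset.toFinsupp (List.ofFn p : Multiset α) a =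
      (Finset.univ.filter fun i => p i = a).card := by
  rw [Multiset.toFinsupp_apply, ← Fin.univ_val_map, Multiset.count_map]
  simp [Finset.card, Finset.filter_val, eq_comm]

theorem explicitVCoeff_eq_sum_wordsWithContent (N : ℕ) (d : Fin (N + 1) →₀ ℕ) :
    explicitVCoeff N d = 1 / ((d.sum fun _ k => k : ℕ) : ℚ) *
      ∑ w ∈ (wordsWithContent d).filter (fun w => (w.map Fin.val).sum + 1 = d.sum fun _ k => k),
        (w.map fun p : Fin (N + 1) => ((p : ℕ).factorial : ℚ)⁻¹).prod := by
  rw [explicitVCoeff, ← sum_filter_ofFn_mem _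
    fun w hw => length_eq_of_mem_wordsWithContent (Finset.mem_filter.1 hw).1]
  congr 1
  refine Finset.sum_congr (Finset.filter_congr fun p _ => ?_) fun p _ => ?_
  · simp only [Finset.mem_filter, mem_wordsWithContent, List.map_ofFn, List.sum_ofFn,
      Function.comp_def, Finsupp.ext_iff, Multiset.toFinsupp_ofFn_apply, eq_comm (b := d _)]
    tauto
  · simp only [one_div, List.map_ofFn, List.prod_ofFn, Function.comp_def]

theorem explicitVCoeff_eq_coeff_forestSeries (N : ℕ) (d : Fin (N + 1) →₀ ℕ) :
    explicitVCoeff N d =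
      coeff d
        (forestSeries (fun p : Fin (N + 1) => ((p : ℕ).factorial : ℚ)⁻¹) Fin.val 1) := by
  rw [explicitVCoeff_eq_sum_wordsWithContent, sum_filter_sum_add_one_eq_nsmul_coeff_forestSeries,
    nsmul_eq_mul]
  rcases eq_or_ne (d.sum fun _ k => k) 0 with hn | hn
  · obtain rfl := (Finsupp.degree_eq_zero_iff d).1 hn
    simp [coeff_zero_eq_constantCoeff_apply, constantCoeff_forestSeries_one]
  · field_simp

theorem dispersionless_topological_solution_unique_and_explicit_general
    (N : ℕ) :
    (∃! v : MvPowerSeries (Fin (N + 1)) ℚ, IsDispersionlessTopologicalSolution N v)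
    ∧ ∀ v : MvPowerSeries (Fin (N + 1)) ℚ, IsDispersionlessTopologicalSolution N v →
        ∀ d, MvPowerSeries.coeff d v = explicitVCoeff N d := by
  set c := fun p : Fin (N + 1) => ((p : ℕ).factorial : ℚ)⁻¹
  have hsol : IsDispersionlessTopologicalSolution N (forestSeries c Fin.val 1) :=
    ⟨constantCoeff_forestSeries_one c Fin.val, forestSeries_one_eq_sum c Fin.val⟩
  have huniq : ∀ v, IsDispersionlessTopologicalSolution N v → v = forestSeries c Fin.val 1 :=
    fun v hv => eq_of_eq_sum_smul_X_mul_pow c Fin.val hv.2 hsol.2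
  refine ⟨⟨_, hsol, huniq⟩, fun v hv d => ?_⟩
  rw [huniq v hv, explicitVCoeff_eq_coeff_forestSeries]

/-- There is a unique formal power series `v` in `t₀,…,t_N` with zero constant term
satisfying `v = Σ_{p=0}^N t_p v^p/p!`, and it is given by
`v = Σ_{n≥1} (1/n) Σ_{p₁+⋯+p_n=n−1} (t_{p₁}/p₁!)⋯(t_{p_n}/p_n!)`. -/
theorem dispersionless_topological_solution_unique_and_explicit
    (N : ℕ) (hN : 1 ≤ N) :
    (∃! v : MvPowerSeries (Fin (N + 1)) ℚ, IsDispersionlessTopologicalSolution N v)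
    ∧ ∀ v : MvPowerSeries (Fin (N + 1)) ℚ, IsDispersionlessTopologicalSolution N v →
        ∀ d, MvPowerSeries.coeff d v = explicitVCoeff N d :=
  dispersionless_topological_solution_unique_and_explicit_general N
end

section
/- With F₀ = Σ_{n≥3} [1/(n(n−1)(n−2))] Σ_{p₁+⋯+p_n=n−3} Π_i (t_{p_i}/p_i!) and v = Σ_{n≥1} (1/n) Σ_{p₁+⋯+p_n=n−1} Π_i (t_{p_i}/p_i!) viewed as formal power series in t₀, t₁, …, t_N (indices p_i ranging over 0,…,N), one has ∂²F₀/∂t₀² = v. -/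
/-- Coefficient at the monomial `d` of
`F₀ = Σ_{n≥3} [1/(n(n−1)(n−2))] Σ_{p₁+⋯+p_n=n−3} (t_{p₁}/p₁!)⋯(t_{p_n}/p_n!)`. -/
noncomputable def F0Coeff (N : ℕ) (d : Fin (N + 1) →₀ ℕ) : ℚ :=
  (1 / (((d.sum fun _ k => k : ℕ) : ℚ) * (((d.sum fun _ k => k : ℕ) : ℚ) - 1)
      * (((d.sum fun _ k => k : ℕ) : ℚ) - 2))) *
    ∑ p ∈ Finset.univ.filter (fun p : Fin (d.sum fun _ k => k) → Fin (N + 1) =>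
        (∑ i, ((p i : ℕ))) + 3 = d.sum (fun _ k => k) ∧
        ∀ q, d q = (Finset.univ.filter fun i => p i = q).card),
      ∏ i, (1 / (((p i : ℕ).factorial : ℚ)))

/-- Partial derivative `∂/∂t_k` of a formal power series, coefficientwise. -/
noncomputable def psDeriv (N : ℕ) (k : Fin (N + 1))
    (F : MvPowerSeries (Fin (N + 1)) ℚ) : MvPowerSeries (Fin (N + 1)) ℚ :=
  fun d => ((d k + 1 : ℕ) : ℚ) * MvPowerSeries.coeff (d + Finsupp.single k 1) F

/-!
Both coefficients are sums `S(d, n)` of `∏ i, 1 / (p i)!` over the words `p` of length `n`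
whose letter multiplicities are the exponent vector `d`; the degree constraint `∑ pᵢ = n - 3`
(resp. `n - 1`) depends only on `d` and is unchanged by adding two letters `0`. Marking an
occurrence of the letter `0` in a word of length `m + 1` is the same as inserting a `0` into a
word of length `m` at one of `m + 1` places, so `(d₀ + 1) S(d + e₀, m + 1) = (m + 1) S(d, m)`.
Applied twice, this turns the factor `(d₀ + 1)(d₀ + 2)` produced by `∂²/∂t₀²` into
`(n + 1)(n + 2)`, which cancels against `1 / (n (n + 1) (n + 2))` and leaves `1 / n`.
-/

open Finset

section Words

variable {α : Type*} [DecidableEq α]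

theorem card_filter_insertNth_eq {m : ℕ} (a : Fin (m + 1)) (x : α) (p : Fin m → α) (q : α) :
    #{i | (Fin.insertNth a x p : Fin (m + 1) → α) i = q} =
      #{i | p i = q} + Finsupp.single x 1 q := by
  simp_rw [card_filter, Fin.sum_univ_succAbove _ a, Fin.insertNth_apply_same,
    Fin.insertNth_apply_succAbove, add_comm, Finsupp.single_apply]

variable [Fintype α]

theorem sum_card_filter_eq_smul_eq_sum_insertNth {M : Type*} [AddCommMonoid M] {m : ℕ}
    (z : α) (f : (Fin (m + 1) → α) → M) :
    ∑ p, #{i | p i = z} • f p = ∑ a, ∑ p : Fin m → α, f (Fin.insertNth a z p) := by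
  simp_rw [← sum_const, sum_filter]
  rw [sum_comm]
  refine sum_congr rfl fun a _ => ?_
  rw [← (Fin.insertNthEquiv (fun _ => α) a).sum_comp, Fintype.sum_prod_type]
  simp only [Fin.insertNthEquiv_apply, Fin.insertNth_apply_same, sum_ite_irrel, sum_const_zero,
    sum_ite_eq', mem_univ, ↓reduceIte]
  rfl

theorem sum_comp_eq_sum_smul_of_forall_eq_card {M : Type*} [AddCommMonoid M] {n : ℕ}
    {d : α →₀ ℕ} {p : Fin n → α} (hp : ∀ q, d q = #{i | p i = q}) (f : α → M) :
    ∑ i, f (p i) = ∑ q, d q • f q := by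
  simp_rw [hp, ← sum_const, ← sum_fiberwise' univ p f]

variable {R : Type*} [CommSemiring R]

def wordSum (w : α → R) (d : α →₀ ℕ) (n : ℕ) : R :=
  ∑ p ∈ univ.filter (fun p : Fin n → α => ∀ q, d q = #{i | p i = q}), ∏ i, w (p i)

theorem sum_filter_sum_add_eq_and_forall_eq_card (g : α → ℕ) (w : α → R) (d : α →₀ ℕ)
    (n c m : ℕ)
    -- any instance: the coefficients decide `∀ q : Fin _` by `Nat.decidableForallFin`
    [DecidablePred fun p : Fin n → α =>
      (∑ i, g (p i)) + c = m ∧ ∀ q, d q = #{i | p i = q}] :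
    ∑ p ∈ univ.filter (fun p : Fin n → α =>
        (∑ i, g (p i)) + c = m ∧ ∀ q, d q = #{i | p i = q}), ∏ i, w (p i) =
      if (∑ q, d q • g q) + c = m then wordSum w d n else 0 := by
  have hweight : ∀ p : Fin n → α, (∀ q, d q = #{i | p i = q}) →
      ∑ i, g (p i) = ∑ q, d q • g q :=
    fun p hp => sum_comp_eq_sum_smul_of_forall_eq_card hp g
  split_ifs with h
  · refine sum_congr (filter_congr fun p _ => ?_) fun _ _ => rfl
    exact ⟨And.right, fun hp => ⟨by rw [hweight p hp, h], hp⟩⟩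
  · refine sum_eq_zero fun p hp => absurd ?_ h
    obtain ⟨-, hdeg, hp⟩ := mem_filter.mp hp
    rwa [← hweight p hp]

theorem wordSum_add_single (w : α → R) (d : α →₀ ℕ) (m : ℕ) (z : α) :
    (d z + 1) * wordSum w (d + Finsupp.single z 1) (m + 1) = (m + 1) * w z * wordSum w d m := by
  have hcount : ∀ p : Fin (m + 1) → α,
      (∀ q, (d + Finsupp.single z 1 : α →₀ ℕ) q = #{i | p i = q}) →
      #{i | p i = z} = d z + 1 := fun p hp => by simp [← hp]
  have hinsert : ∀ (a : Fin (m + 1)) (p : Fin m → α),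
      (∀ q, (d + Finsupp.single z 1 : α →₀ ℕ) q =
        #{i | (Fin.insertNth a z p : Fin (m + 1) → α) i = q}) ↔
        ∀ q, d q = #{i | p i = q} := by
    simp [card_filter_insertNth_eq]
  calc (d z + 1) * wordSum w (d + Finsupp.single z 1) (m + 1)
      = ∑ p : Fin (m + 1) → α, #{i | p i = z} •
          if ∀ q, (d + Finsupp.single z 1 : α →₀ ℕ) q = #{i | p i = q} then ∏ i, w (p i)
          else 0 := by
        rw [wordSum, mul_sum, sum_filter]
        refine sum_congr rfl fun p _ => ?_
        split_ifs with hp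
        · rw [hcount p hp, nsmul_eq_mul]; push_cast; rfl
        · simp
    _ = ∑ _a : Fin (m + 1), w z * wordSum w d m := by
        rw [sum_card_filter_eq_smul_eq_sum_insertNth]
        refine sum_congr rfl fun a _ => ?_
        simp only [hinsert, wordSum, mul_sum, sum_filter]
        refine sum_congr rfl fun p _ => ?_
        rw [Fin.prod_univ_succAbove _ a]
        simp
    _ = (m + 1) * w z * wordSum w d m := by simp [mul_assoc]

theorem wordSum_add_single_two (w : α → R) (d : α →₀ ℕ) (m : ℕ) (z : α) :
    (d z + 1) * (d z + 2) * wordSum w (d + Finsupp.single z 2) (m + 2) =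
      (m + 1) * (m + 2) * w z ^ 2 * wordSum w d m := by
  have hd : ((d + Finsupp.single z 1 : α →₀ ℕ) z : R) + 1 = d z + 2 := by
    simp only [Finsupp.add_apply, Finsupp.single_eq_same]; push_cast; ring
  calc (d z + 1) * (d z + 2) * wordSum w (d + Finsupp.single z 2) (m + 2)
      = (d z + 1) * (((d + Finsupp.single z 1 : α →₀ ℕ) z + 1) *
          wordSum w (d + Finsupp.single z 1 + Finsupp.single z 1) (m + 1 + 1)) := by
        rw [hd, add_assoc, ← Finsupp.single_add]; ring
    _ = (m + 2) * w z * ((d z + 1) * wordSum w (d + Finsupp.single z 1) (m + 1)) := by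
        rw [wordSum_add_single]; push_cast; ring
    _ = (m + 1) * (m + 2) * w z ^ 2 * wordSum w d m := by
        rw [wordSum_add_single]; ring

end Words

section Coefficients

variable (N : ℕ)

theorem F0Coeff_eq_wordSum (d : Fin (N + 1) →₀ ℕ) :
    F0Coeff N d = 1 / ((d.degree : ℚ) * (d.degree - 1) * (d.degree - 2)) *
      if (∑ q, d q • (q : ℕ)) + 3 = d.degree then
        wordSum (fun q : Fin (N + 1) => 1 / ((q : ℕ).factorial : ℚ)) d d.degree
      else 0 := by
  have h := sum_filter_sum_add_eq_and_forall_eq_card (fun q : Fin (N + 1) => (q : ℕ))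
    (fun q : Fin (N + 1) => 1 / ((q : ℕ).factorial : ℚ)) d
    (d.sum fun _ k => k) 3 (d.sum fun _ k => k)
  rw [show d.degree = d.sum fun _ k => k from rfl, F0Coeff, h]

theorem explicitVCoeff_eq_wordSum (d : Fin (N + 1) →₀ ℕ) :
    explicitVCoeff N d = 1 / (d.degree : ℚ) *
      if (∑ q, d q • (q : ℕ)) + 1 = d.degree then
        wordSum (fun q : Fin (N + 1) => 1 / ((q : ℕ).factorial : ℚ)) d d.degree
      else 0 := by
  have h := sum_filter_sum_add_eq_and_forall_eq_card (fun q : Fin (N + 1) => (q : ℕ))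
    (fun q : Fin (N + 1) => 1 / ((q : ℕ).factorial : ℚ)) d
    (d.sum fun _ k => k) 1 (d.sum fun _ k => k)
  rw [show d.degree = d.sum fun _ k => k from rfl, explicitVCoeff, h]

theorem F0Coeff_add_single_zero_two (d : Fin (N + 1) →₀ ℕ) :
    F0Coeff N (d + Finsupp.single 0 2) =
      1 / (((d.degree : ℚ) + 2) * (d.degree + 1) * d.degree) *
        if (∑ q, d q • (q : ℕ)) + 1 = d.degree then
          wordSum (fun q : Fin (N + 1) => 1 / ((q : ℕ).factorial : ℚ)) (d + Finsupp.single 0 2)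
            (d.degree + 2)
        else 0 := by
  have hdegree : (d + Finsupp.single 0 2).degree = d.degree + 2 := by
    rw [map_add, Finsupp.degree_single]
  have hweight : ∑ q, (d + Finsupp.single 0 2 : Fin (N + 1) →₀ ℕ) q • (q : ℕ) =
      ∑ q, d q • (q : ℕ) := by
    simp [add_mul, ite_mul, sum_add_distrib, Finsupp.single_apply]
  rw [F0Coeff_eq_wordSum, hdegree, hweight]
  simp only [show ∀ D : ℕ, D + 3 = d.degree + 2 ↔ D + 1 = d.degree by omega]
  congr 2
  push_cast
  ring

theorem coeff_psDeriv_psDeriv (k : Fin (N + 1)) (F : MvPowerSeries (Fin (N + 1)) ℚ)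
    (d : Fin (N + 1) →₀ ℕ) :
    MvPowerSeries.coeff d (psDeriv N k (psDeriv N k F)) =
      ((d k : ℚ) + 1) * ((d k : ℚ) + 2) *
        MvPowerSeries.coeff (d + Finsupp.single k 2) F := by
  change ((d k + 1 : ℕ) : ℚ) *
    (((d + Finsupp.single k 1 : Fin (N + 1) →₀ ℕ) k + 1 : ℕ) *
      MvPowerSeries.coeff (d + Finsupp.single k 1 + Finsupp.single k 1) F) = _
  rw [add_assoc, ← Finsupp.single_add]
  simp only [Finsupp.add_apply, Finsupp.single_eq_same]
  push_cast
  ring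

end Coefficients

theorem second_derivative_of_F0_is_v_general
    (N : ℕ) (F V : MvPowerSeries (Fin (N + 1)) ℚ)
    (hF : ∀ d, MvPowerSeries.coeff d F = F0Coeff N d)
    (hV : ∀ d, MvPowerSeries.coeff d V = explicitVCoeff N d) :
    psDeriv N 0 (psDeriv N 0 F) = V := by
  ext d
  rw [coeff_psDeriv_psDeriv, hF, hV, F0Coeff_add_single_zero_two, explicitVCoeff_eq_wordSum]
  split_ifs with hdeg
  · have hn : (d.degree : ℚ) ≠ 0 := by norm_cast; omega
    rw [mul_left_comm, wordSum_add_single_two]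
    simp only [Fin.val_zero, Nat.factorial_zero, Nat.cast_one, div_one, one_pow, mul_one]
    field_simp
  · simp

/-- `∂²F₀/∂t₀² = v`: the second `t₀`-derivative of the genus-zero free energy equals
the topological solution of the dispersionless KdV hierarchy. -/
theorem second_derivative_of_F0_is_v
    (N : ℕ) (hN : 1 ≤ N) (F V : MvPowerSeries (Fin (N + 1)) ℚ)
    (hF : ∀ d, MvPowerSeries.coeff d F = F0Coeff N d)
    (hV : ∀ d, MvPowerSeries.coeff d V = explicitVCoeff N d) :
    psDeriv N 0 (psDeriv N 0 F) = V :=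
  second_derivative_of_F0_is_v_general N F V hF hV
end
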